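/- arXiv:2105.02356 — 2 statements merged into one kernel-verified Lean document; each statement's English description precedes it below -/
import Mathlib

section
/- Let G be a strongly connected bridgeless mixed multigraph of radius r. Then every edge of G (directed or undirected) lies on a cycle of length at most 2r + 1. -/
/-- A mixed multigraph: a multigraph whose edges are each either directed
(traversable only from `src` to `dst`) or undirected (traversable both ways).
Parallel edges are allowed since `E` is an abstract edge-index type. -/
structure MixedMultigraph where
  V : Type
  E : Type
  [fintV : Fintype V]
  [fintE : Fintype E]
  src : E → V
  dst : E → V
  directed : E → Bool

attribute [instance] MixedMultigraph.fintV MixedMultigraph.fintE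

namespace MixedMultigraph

/-- A dart is a traversal of an edge; an edge may be traversed in reverse
(`rev = true`) only if it is undirected. -/
structure Dart (G : MixedMultigraph) where
  edge : G.E
  rev : Bool
  ok : rev = true → G.directed edge = false

/-- The starting vertex of a dart. -/
def Dart.fst {G : MixedMultigraph} (d : G.Dart) : G.V :=
  if d.rev then G.dst d.edge else G.src d.edge

/-- The ending vertex of a dart. -/
def Dart.snd {G : MixedMultigraph} (d : G.Dart) : G.V :=
  if d.rev then G.src d.edge else G.dst d.edge

/-- A walk from `u` to `v`: a sequence of darts, consecutive ones sharing endpoints. -/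
inductive Walk (G : MixedMultigraph) : G.V → G.V → Type
  | nil (u : G.V) : Walk G u u
  | cons {w : G.V} (d : G.Dart) (p : Walk G d.snd w) : Walk G d.fst w

namespace Walk

variable {G : MixedMultigraph}

/-- The number of edges of a walk. -/
def length {u v : G.V} : G.Walk u v → ℕ
  | .nil _ => 0
  | .cons _ p => p.length + 1

/-- The list of edges traversed by a walk. -/
def edges {u v : G.V} : G.Walk u v → List G.E
  | .nil _ => []
  | .cons d p => d.edge :: p.edges

/-- The list of darts of a walk. -/
def darts {u v : G.V} : G.Walk u v → List G.Dart
  | .nil _ => []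
  | .cons d p => d :: p.darts

/-- The list of vertices visited by a walk (in order, including both ends). -/
def support {u v : G.V} : G.Walk u v → List G.V
  | .nil u => [u]
  | .cons d p => d.fst :: p.support

/-- A path is a walk with no repeated vertices. -/
def IsPath {u v : G.V} (p : G.Walk u v) : Prop := p.support.Nodup

/-- A cycle is a nonempty closed walk with no repeated edges whose only
repeated vertex is its common first and last vertex. -/
def IsCycle {u : G.V} (p : G.Walk u u) : Prop :=
  0 < p.length ∧ p.edges.Nodup ∧ p.support.tail.Nodup

/-- Two vertices are consecutive on a walk if some dart of the walk joins them. -/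
def Consecutive {u v : G.V} (p : G.Walk u v) (x y : G.V) : Prop :=
  ∃ d ∈ p.darts, (d.fst = x ∧ d.snd = y) ∨ (d.fst = y ∧ d.snd = x)

/-- A chord of a cycle: an edge not on the cycle joining two distinct,
non-consecutive vertices of the cycle. -/
def IsChord {u : G.V} (p : G.Walk u u) (e : G.E) : Prop :=
  e ∉ p.edges ∧ G.src e ∈ p.support ∧ G.dst e ∈ p.support ∧
    G.src e ≠ G.dst e ∧ ¬ p.Consecutive (G.src e) (G.dst e)

end Walk

/-- The distance from `u` to `v`: the least length of a walk from `u` to `v`. -/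
noncomputable def dist (G : MixedMultigraph) (u v : G.V) : ℕ :=
  sInf {n | ∃ p : G.Walk u v, p.length = n}

/-- The eccentricity of a vertex `u`. -/
noncomputable def ecc (G : MixedMultigraph) (u : G.V) : ℕ :=
  sSup {n | ∃ v : G.V, n = max (G.dist u v) (G.dist v u)}

/-- The radius: the minimum eccentricity over all vertices. -/
noncomputable def radius (G : MixedMultigraph) : ℕ :=
  sInf {n | ∃ u : G.V, n = G.ecc u}

/-- The diameter: the maximum distance over all ordered pairs of vertices. -/
noncomputable def diam (G : MixedMultigraph) : ℕ :=
  sSup {n | ∃ u v : G.V, n = G.dist u v}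

/-- A mixed multigraph is strongly connected if there is a walk from every
vertex to every other vertex. -/
def StronglyConnected (G : MixedMultigraph) : Prop :=
  ∀ u v : G.V, Nonempty (G.Walk u v)

/-- The mixed multigraph obtained by deleting the edge `e₀`. -/
noncomputable def deleteEdge (G : MixedMultigraph) (e₀ : G.E) : MixedMultigraph :=
  letI := Classical.decEq G.E
  { V := G.V
    E := {e : G.E // e ≠ e₀}
    fintV := G.fintV
    fintE := inferInstance
    src := fun e => G.src e.1
    dst := fun e => G.dst e.1
    directed := fun e => G.directed e.1 }

/-- A mixed multigraph is bridgeless if it has no bridge. A bridge is an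
undirected edge whose removal destroys strong connectivity. -/
def Bridgeless (G : MixedMultigraph) : Prop :=
  ∀ e : G.E, G.directed e = false → (G.deleteEdge e).StronglyConnected

/-- An orientation: each undirected edge is assigned exactly one of its two
directions (`flip e = true` reverses the stored endpoints); directed edges stay. -/
structure Orientation (G : MixedMultigraph) where
  flip : G.E → Bool
  flip_dir : ∀ e : G.E, G.directed e = true → flip e = false

/-- The digraph resulting from an orientation. -/
def Orientation.graph {G : MixedMultigraph} (o : G.Orientation) : MixedMultigraph :=
  { V := G.V
    E := G.E
    fintV := G.fintV
    fintE := G.fintE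
    src := fun e => if o.flip e then G.dst e else G.src e
    dst := fun e => if o.flip e then G.src e else G.dst e
    directed := fun _ => true }

/-- Edge `e` lies on a cycle of length at most `L`. -/
def EdgeOnCycleLE (G : MixedMultigraph) (e : G.E) (L : ℕ) : Prop :=
  ∃ (u : G.V) (p : G.Walk u u), p.IsCycle ∧ e ∈ p.edges ∧ p.length ≤ L

/-- A mixed multigraph is `k`-chordal if every cycle of length more than `k`
has a chord. -/
def KChordal (G : MixedMultigraph) (k : ℕ) : Prop :=
  ∀ (u : G.V) (p : G.Walk u u), p.IsCycle → k < p.length → ∃ e : G.E, p.IsChord e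

/-- The closed neighbourhood `N[u]`: `u` together with all its in-neighbours,
out-neighbours and undirected neighbours. -/
def closedNbhd (G : MixedMultigraph) (u : G.V) : Set G.V :=
  {u} ∪ {v | ∃ e : G.E, (G.src e = u ∧ G.dst e = v) ∨ (G.src e = v ∧ G.dst e = u)}

/-- A subgraph: a subset of the vertices together with a subset of the edges
having both endpoints in that vertex subset. -/
structure Subgraph (G : MixedMultigraph) where
  verts : Finset G.V
  edges : Finset G.E
  src_mem : ∀ e ∈ edges, G.src e ∈ verts
  dst_mem : ∀ e ∈ edges, G.dst e ∈ verts

/-- A subgraph viewed as a mixed multigraph in its own right. -/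
def Subgraph.toGraph {G : MixedMultigraph} (H : G.Subgraph) : MixedMultigraph :=
  { V := {v : G.V // v ∈ H.verts}
    E := {e : G.E // e ∈ H.edges}
    fintV := FinsetCoe.fintype _
    fintE := FinsetCoe.fintype _
    src := fun e => ⟨G.src e.1, H.src_mem e.1 e.2⟩
    dst := fun e => ⟨G.dst e.1, H.dst_mem e.1 e.2⟩
    directed := fun e => G.directed e.1 }

end MixedMultigraph

/-!
Fix a centre `c`, within distance `r` of and from every vertex, and let `e` lead from `x` to `y`.
A cycle of length at most `2r + 1` through `e` amounts to a walk of length at most `2r` in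
`G - e` from `y` to `x` (or, if `e` is undirected, from `x` to `y`).

If `e` is directed, cut the walk `y ⇝ c ⇝ x` at its first use of `e`, which must start at `x`.
If `e` is undirected, `G - e` is strongly connected, and a shortest walk `u ⇝ v` of `G` either
avoids `e` or leaves `e`-free pieces `u ⇝ x`, `y ⇝ v` (or `u ⇝ y`, `x ⇝ v`). Comparing these
bounds for the pairs `(c, x)`, `(c, y)`, `(x, c)`, `(y, c)` shows that `y ⇝ c ⇝ x` or `x ⇝ c ⇝ y` is
short enough in `G - e`, unless `c` is more than `r` away from and to one endpoint, say `y`, in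
`G - e`. Then the vertex `r + 1` steps along a shortest walk `c ⇝ y` in `G - e` provides the
short walk instead.
-/

namespace MixedMultigraph

variable {G : MixedMultigraph} {u v w : G.V}

theorem Dart.fst_snd_cases (d : G.Dart) :
    (d.fst = G.src d.edge ∧ d.snd = G.dst d.edge) ∨
      (d.fst = G.dst d.edge ∧ d.snd = G.src d.edge) := by
  unfold Dart.fst Dart.snd
  cases d.rev <;> simp

theorem Dart.fst_eq_src_or_dst (d : G.Dart) : d.fst = G.src d.edge ∨ d.fst = G.dst d.edge :=
  d.fst_snd_cases.imp And.left And.left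

theorem Dart.snd_eq_dst_or_src (d : G.Dart) : d.snd = G.dst d.edge ∨ d.snd = G.src d.edge :=
  d.fst_snd_cases.imp And.right And.right

theorem Dart.fst_eq_src_of_directed (d : G.Dart) (h : G.directed d.edge = true) :
    d.fst = G.src d.edge := by
  cases hr : d.rev
  · simp [Dart.fst, hr]
  · simp [d.ok hr] at h

namespace Walk

@[simp] theorem length_cons (d : G.Dart) (p : G.Walk d.snd v) :
    (Walk.cons d p).length = p.length + 1 := rfl

def append : {u v w : G.V} → G.Walk u v → G.Walk v w → G.Walk u w
  | _, _, _, .nil _, q => q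
  | _, _, _, .cons d p, q => .cons d (p.append q)

theorem length_append (p : G.Walk u v) (q : G.Walk v w) :
    (p.append q).length = p.length + q.length := by
  induction p with
  | nil => exact (Nat.zero_add _).symm
  | cons d p ih => simp only [append, length_cons, ih, Nat.add_right_comm]

theorem start_mem_support (p : G.Walk u v) : u ∈ p.support := by
  cases p <;> simp [support]

theorem mem_support_of_mem_edges {e : G.E} {p : G.Walk u v} (he : e ∈ p.edges) :
    G.src e ∈ p.support ∧ G.dst e ∈ p.support := by
  induction p with
  | nil => simp [edges] at he
  | cons d p ih =>
    simp only [edges, List.mem_cons] at he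
    simp only [support, List.mem_cons]
    rcases he with rfl | he
    · have := p.start_mem_support
      rcases d.fst_snd_cases with ⟨h₁, h₂⟩ | ⟨h₁, h₂⟩ <;> grind
    · exact (ih he).imp Or.inr Or.inr

theorem IsPath.edges_nodup {p : G.Walk u v} (hp : p.IsPath) : p.edges.Nodup := by
  induction p with
  | nil => simp [edges]
  | cons d p ih =>
    simp only [IsPath, support, List.nodup_cons] at hp
    simp only [edges, List.nodup_cons]
    refine ⟨fun he => hp.1 ?_, ih hp.2⟩
    have := mem_support_of_mem_edges he
    rcases d.fst_snd_cases with ⟨h, -⟩ | ⟨h, -⟩ <;> rw [h] <;> tauto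

theorem exists_suffix_of_mem_support {x : G.V} (p : G.Walk u v) (hx : x ∈ p.support) :
    ∃ q : G.Walk x v, q.support <:+ p.support ∧ q.edges ⊆ p.edges ∧ q.length ≤ p.length := by
  induction p with
  | nil =>
    obtain rfl : x = _ := List.mem_singleton.1 hx
    exact ⟨.nil x, List.suffix_refl _, List.Subset.refl _, le_rfl⟩
  | cons d p ih =>
    simp only [support, List.mem_cons] at hx
    rcases hx with rfl | hx
    · exact ⟨.cons d p, List.suffix_refl _, List.Subset.refl _, le_rfl⟩
    · obtain ⟨q, hs, he, hl⟩ := ih hx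
      exact ⟨q, hs.trans (List.suffix_cons _ _), List.Subset.trans he (List.subset_cons_self _ _),
        hl.trans (Nat.le_succ _)⟩

theorem exists_isPath (p : G.Walk u v) :
    ∃ q : G.Walk u v, q.IsPath ∧ q.edges ⊆ p.edges ∧ q.length ≤ p.length := by
  induction p with
  | nil u => exact ⟨.nil u, List.nodup_singleton u, List.Subset.refl _, le_rfl⟩
  | cons d p ih =>
    obtain ⟨q, hq, he, hl⟩ := ih
    by_cases hd : d.fst ∈ q.support
    · obtain ⟨q', hs, he', hl'⟩ := q.exists_suffix_of_mem_support hd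
      exact ⟨q', hq.sublist hs.sublist,
        List.Subset.trans (List.Subset.trans he' he) (List.subset_cons_self _ _),
        hl'.trans (hl.trans (Nat.le_succ _))⟩
    · exact ⟨.cons d q, List.nodup_cons.2 ⟨hd, hq⟩, List.cons_subset_cons _ he,
        Nat.succ_le_succ hl⟩

theorem exists_append_of_le_length (p : G.Walk u v) {k : ℕ} (hk : k ≤ p.length) :
    ∃ (w : G.V) (p₁ : G.Walk u w) (p₂ : G.Walk w v),
      p₁.length = k ∧ p₂.length + k = p.length := by
  induction p generalizing k with
  | nil u =>
    obtain rfl : k = 0 := Nat.le_zero.1 hk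
    exact ⟨u, .nil u, .nil u, rfl, rfl⟩
  | cons d p ih =>
    cases k with
    | zero => exact ⟨_, .nil _, .cons d p, rfl, rfl⟩
    | succ k =>
      obtain ⟨w, p₁, p₂, h₁, h₂⟩ := ih (k := k) (by simp only [length_cons] at hk; omega)
      exact ⟨w, .cons d p₁, p₂, congrArg (· + 1) h₁, by simp only [length_cons]; omega⟩

noncomputable def ofDeleteEdge {e : G.E} : {u v : G.V} → (G.deleteEdge e).Walk u v → G.Walk u v
  | _, _, .nil u => Walk.nil (G := G) u
  | _, _, .cons d p => .cons ⟨d.edge.1, d.rev, d.ok⟩ p.ofDeleteEdge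

theorem length_ofDeleteEdge {e : G.E} {x y : (G.deleteEdge e).V}
    (p : (G.deleteEdge e).Walk x y) :
    (ofDeleteEdge p).length = p.length := by
  induction p with
  | nil => rfl
  | cons d p ih => exact congrArg Nat.succ ih

theorem not_mem_edges_ofDeleteEdge {e : G.E} {x y : (G.deleteEdge e).V}
    (p : (G.deleteEdge e).Walk x y) :
    e ∉ (ofDeleteEdge p).edges := by
  induction p with
  | nil => simp [ofDeleteEdge, edges]
  | cons d p ih =>
    simp only [ofDeleteEdge, edges, List.mem_cons, not_or]
    exact ⟨fun h => d.edge.2 h.symm, ih⟩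

/-- A walk either avoids `e`, or, cut before its first and after its last traversal of `e`,
leaves two `e`-free pieces. -/
theorem exists_deleteEdge_or (e : G.E) (p : G.Walk u v) :
    (∃ q : (G.deleteEdge e).Walk u v, q.length ≤ p.length) ∨
      ∃ (a b : G.V) (q₁ : (G.deleteEdge e).Walk u a) (q₂ : (G.deleteEdge e).Walk b v),
        (∃ d : G.Dart, d.edge = e ∧ d.fst = a) ∧ (∃ d : G.Dart, d.edge = e ∧ d.snd = b) ∧
          q₁.length + q₂.length < p.length := by
  induction p with
  | nil u => exact .inl ⟨Walk.nil (G := G.deleteEdge e) u, le_rfl⟩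
  | cons d p ih =>
    by_cases hd : d.edge = e
    · refine .inr ?_
      rcases ih with ⟨q, hq⟩ | ⟨a, b, q₁, q₂, -, hb, hq⟩
      · exact ⟨_, _, Walk.nil (G := G.deleteEdge e) _, q, ⟨d, hd, rfl⟩, ⟨d, hd, rfl⟩,
          show 0 + q.length < p.length + 1 by omega⟩
      · exact ⟨_, b, Walk.nil (G := G.deleteEdge e) _, q₂, ⟨d, hd, rfl⟩, hb,
          show 0 + q₂.length < p.length + 1 by omega⟩
    · let d' : (G.deleteEdge e).Dart := ⟨⟨d.edge, hd⟩, d.rev, d.ok⟩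
      rcases ih with ⟨q, hq⟩ | ⟨a, b, q₁, q₂, ha, hb, hq⟩
      · exact .inl ⟨.cons d' q, Nat.succ_le_succ hq⟩
      · exact .inr ⟨a, b, .cons d' q₁, q₂, ha, hb,
          show q₁.length + 1 + q₂.length < p.length + 1 by omega⟩

theorem exists_deleteEdge_of_directed {e : G.E} (he : G.directed e = true)
    (p : G.Walk u (G.src e)) :
    ∃ q : (G.deleteEdge e).Walk u (G.src e), q.length ≤ p.length := by
  rcases p.exists_deleteEdge_or e with hq | ⟨a, b, q₁, q₂, ⟨d, rfl, ha⟩, -, hq⟩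
  · exact hq
  · rw [d.fst_eq_src_of_directed he] at ha
    subst ha
    exact ⟨q₁, by omega⟩

end Walk

theorem dist_le (p : G.Walk u v) : G.dist u v ≤ p.length :=
  Nat.sInf_le ⟨p, rfl⟩

theorem exists_walk_length_eq_dist (hG : G.StronglyConnected) (u v : G.V) :
    ∃ p : G.Walk u v, p.length = G.dist u v :=
  Nat.sInf_mem (s := {n | ∃ p : G.Walk u v, p.length = n}) ⟨_, (hG u v).some, rfl⟩

theorem dist_le_add (p : G.Walk u v) (q : G.Walk v w) : G.dist u w ≤ p.length + q.length :=
  p.length_append q ▸ dist_le (p.append q)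

theorem dist_triangle (hG : G.StronglyConnected) (u v w : G.V) :
    G.dist u w ≤ G.dist u v + G.dist v w := by
  obtain ⟨p, hp⟩ := exists_walk_length_eq_dist hG u v
  obtain ⟨q, hq⟩ := exists_walk_length_eq_dist hG v w
  exact hp ▸ hq ▸ dist_le_add p q

theorem exists_dist_le_and_add_le (hG : G.StronglyConnected) {k : ℕ} (hk : k ≤ G.dist u v) :
    ∃ w, G.dist u w ≤ k ∧ G.dist w v + k ≤ G.dist u v := by
  obtain ⟨p, hp⟩ := exists_walk_length_eq_dist hG u v
  obtain ⟨w, p₁, p₂, h₁, h₂⟩ := p.exists_append_of_le_length (hp ▸ hk)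
  exact ⟨w, h₁ ▸ dist_le p₁, hp ▸ h₂ ▸ Nat.add_le_add_right (dist_le p₂) k⟩

theorem exists_center [Nonempty G.V] :
    ∃ c, ∀ v, G.dist c v ≤ G.radius ∧ G.dist v c ≤ G.radius := by
  obtain ⟨c, hc⟩ : G.radius ∈ {n | ∃ u : G.V, n = G.ecc u} :=
    Nat.sInf_mem (s := {n | ∃ u : G.V, n = G.ecc u}) ⟨_, Classical.arbitrary G.V, rfl⟩
  have hbdd : BddAbove {n | ∃ w, n = max (G.dist c w) (G.dist w c)} :=
    (Set.finite_range fun w => max (G.dist c w) (G.dist w c)).bddAbove.mono <| by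
      rintro _ ⟨w, rfl⟩
      exact ⟨w, rfl⟩
  exact ⟨c, fun v => max_le_iff.1 (hc ▸ le_csSup hbdd ⟨v, rfl⟩)⟩

/-- `v` is within distance `r` of `u` once an undirected edge joining `x` and `y` is added. -/
def DistLEVia (G : MixedMultigraph) (x y : G.V) (r : ℕ) (u v : G.V) : Prop :=
  G.dist u v ≤ r ∨ G.dist u x + G.dist y v < r ∨ G.dist u y + G.dist x v < r

theorem distLEVia_comm {x y : G.V} {r : ℕ} :
    G.DistLEVia x y r u v ↔ G.DistLEVia y x r u v := by
  unfold DistLEVia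
  tauto

theorem distLEVia_deleteEdge (hG : G.StronglyConnected) (e : G.E) {r : ℕ}
    (h : G.dist u v ≤ r) : (G.deleteEdge e).DistLEVia (G.src e) (G.dst e) r u v := by
  obtain ⟨p, hp⟩ := exists_walk_length_eq_dist hG u v
  rcases p.exists_deleteEdge_or e with ⟨q, hq⟩ | ⟨a, b, q₁, q₂, ⟨d, rfl, ha⟩, ⟨d', hd', hb⟩, hq⟩
  · exact .inl ((dist_le q).trans (by omega))
  have h₁ := dist_le q₁
  have h₂ := dist_le q₂
  unfold DistLEVia
  rcases d.fst_eq_src_or_dst with h | h <;> rcases d'.snd_eq_dst_or_src with h' | h' <;>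
    rw [hd'] at h' <;> rw [h] at ha <;> rw [h'] at hb <;> subst ha hb
  · omega
  · exact .inl ((dist_le_add q₁ q₂).trans (by omega))
  · exact .inl ((dist_le_add q₁ q₂).trans (by omega))
  · omega

theorem dist_le_two_mul_of_lt_dist (hG : G.StronglyConnected) {x y c : G.V} {r : ℕ}
    (hc : ∀ u, G.DistLEVia x y r c u ∧ G.DistLEVia x y r u c)
    (hyc : r < G.dist y c) (hcy : r < G.dist c y) :
    G.dist y x ≤ 2 * r ∨ G.dist x y ≤ 2 * r := by
  -- `u` lies `r + 1` steps along a shortest walk `c ⇝ y`, too far for a direct short walk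
  -- `c ⇝ u`: so `y ⇝ u` is short, and `y ⇝ u ⇝ c ⇝ x` or `x ⇝ c ⇝ u ⇝ y` closes up.
  obtain ⟨u, hcu, huy⟩ := exists_dist_le_and_add_le hG (k := r + 1) hcy
  have := dist_triangle hG c u y
  have := dist_triangle hG y u x
  have := dist_triangle hG u c x
  have := dist_triangle hG x u y
  have := dist_triangle hG x c u
  obtain ⟨h₁, h₂⟩ := hc u
  unfold DistLEVia at h₁ h₂
  omega

theorem dist_le_two_mul (hG : G.StronglyConnected) {x y c : G.V} {r : ℕ}
    (hc : ∀ u, G.DistLEVia x y r c u ∧ G.DistLEVia x y r u c) :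
    G.dist y x ≤ 2 * r ∨ G.dist x y ≤ 2 * r := by
  by_cases hy : r < G.dist y c ∧ r < G.dist c y
  · exact dist_le_two_mul_of_lt_dist hG hc hy.1 hy.2
  by_cases hx : r < G.dist x c ∧ r < G.dist c x
  · have hc' u : G.DistLEVia y x r c u ∧ G.DistLEVia y x r u c :=
      (hc u).imp distLEVia_comm.1 distLEVia_comm.1
    exact (dist_le_two_mul_of_lt_dist hG hc' hx.1 hx.2).symm
  -- otherwise the walks `y ⇝ c ⇝ x` or `x ⇝ c ⇝ y` are short enough
  have := dist_triangle hG y c x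
  have := dist_triangle hG x c y
  obtain ⟨hcx, hxc⟩ := hc x
  obtain ⟨hcy, hyc⟩ := hc y
  unfold DistLEVia at hcx hxc hcy hyc
  omega

theorem edgeOnCycleLE_of_deleteEdge_walk (d : G.Dart)
    (q : (G.deleteEdge d.edge).Walk d.snd d.fst) {L : ℕ} (hq : q.length ≤ L) :
    G.EdgeOnCycleLE d.edge (L + 1) := by
  obtain ⟨p, hp, hpq, hlen⟩ := (Walk.ofDeleteEdge q).exists_isPath
  replace hlen : p.length ≤ q.length := hlen.trans_eq (Walk.length_ofDeleteEdge q)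
  refine ⟨d.fst, .cons d p, ⟨Nat.succ_pos _, ?_, hp⟩, List.mem_cons_self,
    Nat.succ_le_succ (hlen.trans hq)⟩
  exact List.nodup_cons.2 ⟨fun h => Walk.not_mem_edges_ofDeleteEdge q (hpq h), hp.edges_nodup⟩

end MixedMultigraph

open MixedMultigraph in
/-- in a strongly connected bridgeless mixed multigraph of radius
`r`, every edge lies on a cycle of length at most `2r + 1`. -/
theorem edge_on_short_cycle (G : MixedMultigraph) (hSC : G.StronglyConnected)
    (hB : G.Bridgeless) (r : ℕ) (hrad : G.radius = r) (e : G.E) :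
    G.EdgeOnCycleLE e (2 * r + 1) := by
  have : Nonempty G.V := ⟨G.src e⟩
  obtain ⟨c, hc⟩ := G.exists_center
  rw [hrad] at hc
  cases hdir : G.directed e with
  | false =>
    have hH := hB e hdir
    rcases dist_le_two_mul hH (c := c) fun u =>
        ⟨distLEVia_deleteEdge hSC e (hc u).1, distLEVia_deleteEdge hSC e (hc u).2⟩ with h | h
    · obtain ⟨q, hq⟩ := exists_walk_length_eq_dist hH (G.dst e) (G.src e)
      exact edgeOnCycleLE_of_deleteEdge_walk ⟨e, false, nofun⟩ q (hq ▸ h)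
    · obtain ⟨q, hq⟩ := exists_walk_length_eq_dist hH (G.src e) (G.dst e)
      exact edgeOnCycleLE_of_deleteEdge_walk ⟨e, true, fun _ => hdir⟩ q (hq ▸ h)
  | true =>
    obtain ⟨p₁, hp₁⟩ := exists_walk_length_eq_dist hSC (G.dst e) c
    obtain ⟨p₂, hp₂⟩ := exists_walk_length_eq_dist hSC c (G.src e)
    obtain ⟨q, hq⟩ := Walk.exists_deleteEdge_of_directed hdir (p₁.append p₂)
    refine edgeOnCycleLE_of_deleteEdge_walk ⟨e, false, nofun⟩ q (hq.trans ?_)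
    rw [Walk.length_append, hp₁, hp₂, two_mul]
    exact add_le_add (hc _).2 (hc _).1
end

section
/- Let n and k be natural numbers, let S₁ = {2i − 1 : 1 ≤ i ≤ n} be the set of the first n odd numbers, and let S₂ be a multiset consisting of k copies of a single value c, where c = 2n − 1 or c = 2n. Then the multiset S = S₁ ∪ S₂ can be partitioned into two multisets A and B such that |Σ_{a∈A} a − Σ_{b∈B} b| ≤ 2. -/
/-!
Call a multiset of naturals *dense* if every `m` up to its total is met, up to an excess of at
most `1`, by the sum of a sub-multiset. Adjoining an element `c ≤ S.sum + 2` to a dense `S`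
keeps it dense, since the one value not reached by `c` plus a sub-sum of `S` or by a sub-sum of
`S` alone is `S.sum + 1 = c - 1`, which lies within `1` of `S.sum`. Consing the odd numbers
`2i + 1 ≤ i² + 2` in increasing order and then copies of `c ≤ 2n ≤ n² + 2` shows the whole
multiset is dense; a sub-multiset whose sum is within `1` below half the total then gives the
partition.
-/

def SubsumsDense (S : Multiset ℕ) : Prop :=
  ∀ m ≤ S.sum, ∃ A ≤ S, A.sum ≤ m ∧ m ≤ A.sum + 1

namespace SubsumsDense

theorem zero : SubsumsDense 0 := fun m hm =>
  ⟨0, le_rfl, Nat.zero_le m, by rw [Multiset.sum_zero] at hm ⊢; omega⟩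

theorem cons {S : Multiset ℕ} {c : ℕ} (hS : SubsumsDense S) (hc : c ≤ S.sum + 2) :
    SubsumsDense (c ::ₘ S) := by
  intro m hm
  rw [Multiset.sum_cons] at hm
  by_cases hmS : m ≤ S.sum
  · obtain ⟨A, hAS, hAm, hmA⟩ := hS m hmS
    exact ⟨A, hAS.trans (Multiset.le_cons_self S c), hAm, hmA⟩
  by_cases hcm : c ≤ m
  · obtain ⟨A, hAS, hAm, hmA⟩ := hS (m - c) (by omega)
    refine ⟨c ::ₘ A, Multiset.cons_le_cons c hAS, ?_, ?_⟩ <;> rw [Multiset.sum_cons] <;> omega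
  · exact ⟨S, Multiset.le_cons_self S c, by omega, by omega⟩

theorem add_replicate {S : Multiset ℕ} {c : ℕ} (hS : SubsumsDense S) (hc : c ≤ S.sum + 2)
    (k : ℕ) : SubsumsDense (S + Multiset.replicate k c) := by
  induction k with
  | zero => simpa using hS
  | succ k ih =>
    rw [Multiset.replicate_succ, Multiset.add_cons]
    refine ih.cons (hc.trans ?_)
    simp

theorem exists_add_eq_abs_sub_le_two {S : Multiset ℕ} (hS : SubsumsDense S) :
    ∃ A B : Multiset ℕ, A + B = S ∧ |(A.sum : ℤ) - (B.sum : ℤ)| ≤ 2 := by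
  obtain ⟨A, hAS, hAm, hmA⟩ := hS ((S.sum + 1) / 2) (by omega)
  have hsum : A.sum + (S - A).sum = S.sum := by
    rw [← Multiset.sum_add, add_tsub_cancel_of_le hAS]
  refine ⟨A, S - A, add_tsub_cancel_of_le hAS, ?_⟩
  rw [abs_le]
  constructor <;> omega

end SubsumsDense

def firstOdds (n : ℕ) : Multiset ℕ := (Finset.Icc 1 n).val.map (fun i => 2 * i - 1)

theorem firstOdds_succ (n : ℕ) : firstOdds (n + 1) = (2 * n + 1) ::ₘ firstOdds n := by
  rw [firstOdds, ← Finset.insert_Icc_right_eq_Icc_add_one (by omega : 1 ≤ n + 1),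
    Finset.insert_val_of_notMem (by simp), Multiset.map_cons]
  rfl

theorem sum_firstOdds (n : ℕ) : (firstOdds n).sum = n ^ 2 := by
  induction n with
  | zero => rfl
  | succ n ih =>
    rw [firstOdds_succ, Multiset.sum_cons, ih]
    ring

theorem subsumsDense_firstOdds (n : ℕ) : SubsumsDense (firstOdds n) := by
  induction n with
  | zero => exact SubsumsDense.zero
  | succ n ih =>
    rw [firstOdds_succ]
    refine ih.cons ?_
    rw [sum_firstOdds]
    nlinarith [sq_nonneg ((n : ℤ) - 1)]

/-- the first `n` odd numbers together with `k` copies of a value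
`c ∈ {2n − 1, 2n}` can be partitioned (as a multiset) into two multisets whose
sums differ by at most `2`. -/
theorem odd_numbers_multiset_partition (n k c : ℕ)
    (hc : c = 2 * n - 1 ∨ c = 2 * n) :
    ∃ A B : Multiset ℕ,
      A + B = (Finset.Icc 1 n).val.map (fun i => 2 * i - 1) +
        Multiset.replicate k c ∧
      |(A.sum : ℤ) - (B.sum : ℤ)| ≤ 2 := by
  have hc_le : c ≤ (firstOdds n).sum + 2 := by
    rw [sum_firstOdds]
    have : c ≤ 2 * n := by omega
    nlinarith [sq_nonneg ((n : ℤ) - 1)]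
  exact ((subsumsDense_firstOdds n).add_replicate hc_le k).exists_add_eq_abs_sub_le_two
end
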